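/- arXiv:1709.09398 — 2 statements merged into one kernel-verified Lean document; each statement's English description precedes it below -/
import Mathlib

section
/- A group possessing the ascending chain condition on centralizers cannot contain an infinite strictly ascending chain of centralizers; in particular, any linear group over a field satisfies the ascending chain condition on centralizers. -/
/-!
Embed `G` in the matrix algebra `M_n(F)` and send a centralizer `C = C_G(S)` to the `F`-span of
its image. Every matrix in that span still commutes with `S`, so `C` is recovered as the set of
elements whose image lies in the span. Hence an ascending chain of centralizers yields an
ascending chain of subspaces of the finite-dimensional space `M_n(F)`, which stabilizes, and the
chain of centralizers stabilizes with it.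
-/

open Function

namespace Subgroup

variable {G K A : Type*} [Group G] [CommRing K] [Ring A] [Algebra K A]

theorem span_image_centralizer_le_centralizer (f : G →* A) {S : Set G} {s : G} (hs : s ∈ S) :
    Submodule.span K (f '' centralizer S) ≤
      Subalgebra.toSubmodule (Subalgebra.centralizer K {f s}) := by
  rw [Submodule.span_le]
  rintro _ ⟨g, hg, rfl⟩ _ rfl
  simp only [← map_mul, mem_centralizer_iff.mp hg s hs]

theorem mem_centralizer_of_map_mem_span {f : G →* A} (hf : Injective f) {S : Set G} {g : G}
    (hg : f g ∈ Submodule.span K (f '' centralizer S)) : g ∈ centralizer S := by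
  refine mem_centralizer_iff.mpr fun s hs => hf ?_
  have hcomm := span_image_centralizer_le_centralizer f hs hg
  rw [Subalgebra.mem_toSubmodule, Subalgebra.mem_centralizer_iff] at hcomm
  simpa only [map_mul] using hcomm (f s) rfl

theorem centralizer_le_of_span_image_le {f : G →* A} (hf : Injective f) {S T : Set G}
    (h : Submodule.span K (f '' centralizer T) ≤ Submodule.span K (f '' centralizer S)) :
    centralizer T ≤ centralizer S :=
  fun g hg => mem_centralizer_of_map_mem_span hf (h (Submodule.subset_span ⟨g, hg, rfl⟩))

theorem exists_centralizer_eq_of_monotone [IsNoetherian K A] {f : G →* A} (hf : Injective f)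
    {S : ℕ → Set G} (hS : Monotone fun k => centralizer (S k)) :
    ∃ N, ∀ m, N ≤ m → centralizer (S m) = centralizer (S N) := by
  obtain ⟨N, hN⟩ := monotone_stabilizes_iff_noetherian.mpr ‹IsNoetherian K A›
    ⟨fun k => Submodule.span K (f '' centralizer (S k)),
      fun _ _ hab => Submodule.span_mono (Set.image_mono (hS hab))⟩
  exact ⟨N, fun m hm => le_antisymm (centralizer_le_of_span_image_le hf (hN m hm).ge) (hS hm)⟩

end Subgroup

/-- Every linear group (i.e. every subgroup of `GL(n, F)` for a field `F`) satisfies the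
ascending chain condition on centralizers: every ascending chain of centralizers of
subsets stabilizes, so there is no infinite strictly ascending chain of centralizers. -/
theorem linear_group_acc_on_centralizers
    (F : Type*) [Field F] (n : ℕ) (G : Subgroup (GL (Fin n) F))
    (S : ℕ → Set G)
    (hchain : ∀ k : ℕ, Subgroup.centralizer (S k) ≤ Subgroup.centralizer (S (k + 1))) :
    (∃ N : ℕ, ∀ m : ℕ, N ≤ m →
      Subgroup.centralizer (S m) = Subgroup.centralizer (S N)) ∧
    ¬ StrictMono (fun k => Subgroup.centralizer (S k)) := by
  have hembed : Injective ((Units.coeHom (Matrix (Fin n) (Fin n) F)).comp G.subtype) :=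
    Units.val_injective.comp Subtype.val_injective
  obtain ⟨N, hN⟩ :=
    Subgroup.exists_centralizer_eq_of_monotone (K := F) hembed (monotone_nat_of_le_succ hchain)
  exact ⟨⟨N, hN⟩, fun hstrict => (hstrict N.lt_succ_self).ne' (hN (N + 1) N.le_succ)⟩
end

section
/- The symmetric group on an infinite set is not linear: Sym(ℕ) does not embed into GL(n, F) for any n and any field F. -/
/-!
The elementary abelian group `A = (ℤ/p)^(n+1)` is finite, hence embeds into `Sym(ℕ)` by Cayley's
theorem. Choose the prime `p` invertible in `F` and pass to the algebraic closure `K` of `F`. The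
images of the elements of `A` in `End(Kⁿ)` commute and are annihilated by the separable polynomial
`X ^ p - 1`, so they are simultaneously diagonalisable with `p`-th roots of unity as eigenvalues.
At most `n` joint eigenspaces occur, so a faithful representation injects `A` into `n`-tuples of
`p`-th roots of unity, which forces `p ^ (n + 1) ≤ p ^ n`.
-/

open Module Module.End Polynomial

theorem Polynomial.card_nthRootsFinset_le {R : Type*} [CommRing R] [IsDomain R] (n : ℕ) (a : R) :
    (nthRootsFinset n a).card ≤ n := by
  classical
  rw [nthRootsFinset_def]
  exact (Multiset.toFinset_card_le _).trans (card_nthRoots n a)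

theorem exists_prime_natCast_ne_zero (R : Type*) [NonAssocRing R] [Nontrivial R] :
    ∃ p : ℕ, p.Prime ∧ (p : R) ≠ 0 := by
  obtain ⟨p, hlt, hp⟩ := Nat.exists_infinite_primes (ringChar R + 1)
  refine ⟨p, hp, fun h ↦ ?_⟩
  rcases hp.eq_one_or_self_of_dvd _ (ringChar.dvd h) with h1 | h1
  · exact CharP.char_ne_one R _ h1
  · omega

theorem Multiplicative.zmod_pow_eq_one (p : ℕ) (x : Multiplicative (ZMod p)) : x ^ p = 1 := by
  rw [← ofAdd_toAdd x, ← ofAdd_nsmul, nsmul_eq_mul, ZMod.natCast_self, zero_mul, ofAdd_zero]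

theorem Equiv.Perm.exists_injective_monoidHom_of_countable (G α : Type*) [Group G] [Countable G]
    [Infinite α] : ∃ ι : G →* Equiv.Perm α, Function.Injective ι := by
  obtain ⟨c, hc⟩ := Countable.exists_injective_nat G
  let emb : G ↪ α := (⟨c, hc⟩ : G ↪ ℕ).trans (Infinite.natEmbedding α)
  exact ⟨(viaEmbeddingHom emb).comp (MulAction.toPermHom G G),
    (viaEmbeddingHom_injective emb).comp MulAction.toPerm_injective⟩

theorem Matrix.GeneralLinearGroup.map_injective {n R S : Type*} [Fintype n] [DecidableEq n]
    [CommRing R] [CommRing S] {f : R →+* S} (hf : Function.Injective f) :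
    Function.Injective (map (n := n) f) := fun A B h ↦
  Units.ext <| Matrix.ext fun i j ↦ hf <| by
    simpa using congrArg (fun C : GL n S ↦ (C : Matrix n n S) i j) h

namespace Module.End

variable {K V : Type*} [Field K] [AddCommGroup V] [Module K V]

theorem isSemisimple_of_pow_eq_one {T : End K V} {e : ℕ} (he : (e : K) ≠ 0) (hT : T ^ e = 1) :
    T.IsSemisimple := by
  refine isSemisimple_of_squarefree_aeval_eq_zero (p := X ^ e - 1) ?_ (by simp [hT])
  simpa using (separable_X_pow_sub_C_unit (1 : Kˣ) he.isUnit).squarefree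

theorem pow_eq_one_of_hasEigenvalue {T : End K V} {e : ℕ} {μ : K} (hT : T ^ e = 1)
    (hμ : T.HasEigenvalue μ) : μ ^ e = 1 := by
  obtain ⟨v, hv⟩ := hμ.exists_hasEigenvector
  have h := hv.pow_apply e
  rw [hT, one_apply] at h
  exact smul_left_injective K hv.2 (by simpa using h.symm)

section Family

variable {ι : Type*} {T : ι → End K V}

theorem iSup_iInf_eigenspace_eq_top_of_commute [IsAlgClosed K] [FiniteDimensional K V]
    (hT : ∀ i, (T i).IsSemisimple) (h : Pairwise fun i j ↦ Commute (T i) (T j)) :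
    ⨆ χ : ι → K, ⨅ i, eigenspace (T i) (χ i) = ⊤ := by
  simpa only [((hT _).isFinitelySemisimple).maxGenEigenspace_eq_eigenspace] using
    iSup_iInf_maxGenEigenspace_eq_top_of_iSup_maxGenEigenspace_eq_top_of_commute T h
      fun i ↦ iSup_maxGenEigenspace_eq_top (T i)

theorem iSupIndep_iInf_eigenspace_of_commute (h : ∀ i j, Commute (T i) (T j)) :
    iSupIndep fun χ : ι → K ↦ ⨅ i, eigenspace (T i) (χ i) :=
  (independent_iInf_maxGenEigenspace_of_forall_mapsTo T
    fun i j _ ↦ mapsTo_maxGenEigenspace_of_comm (h j i) _).mono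
    fun _ ↦ iInf_mono fun _ ↦ eigenspace_le_maxGenEigenspace

theorem hasEigenvalue_of_iInf_eigenspace_ne_bot {χ : ι → K}
    (hχ : ⨅ i, eigenspace (T i) (χ i) ≠ ⊥) (i : ι) : (T i).HasEigenvalue (χ i) :=
  hasEigenvalue_iff.mpr fun h ↦ hχ (eq_bot_iff.mpr (h ▸ iInf_le _ i))

theorem eq_of_forall_iInf_eigenspace_ne_bot (htop : ⨆ χ : ι → K, ⨅ i, eigenspace (T i) (χ i) = ⊤)
    {i j : ι} (h : ∀ χ : ι → K, ⨅ k, eigenspace (T k) (χ k) ≠ ⊥ → χ i = χ j) : T i = T j := by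
  rw [← sub_eq_zero, ← LinearMap.ker_eq_top, eq_top_iff, ← htop]
  refine iSup_le fun χ x hx ↦ ?_
  rw [LinearMap.mem_ker, LinearMap.sub_apply, sub_eq_zero]
  by_cases hχ : ⨅ k, eigenspace (T k) (χ k) = ⊥
  · rw [hχ, Submodule.mem_bot] at hx
    simp [hx]
  · have hmem : ∀ k, T k x = χ k • x := fun k ↦
      mem_eigenspace_iff.mp ((Submodule.mem_iInf _).mp hx k)
    rw [hmem, hmem, h χ hχ]

end Family

theorem natCard_le_pow_finrank_of_injective [IsAlgClosed K] [FiniteDimensional K V] {G : Type*}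
    [CommGroup G] {e : ℕ} (he : (e : K) ≠ 0) (hG : ∀ g : G, g ^ e = 1) {ρ : G →* End K V}
    (hρ : Function.Injective ρ) : Nat.card G ≤ e ^ finrank K V := by
  have he0 : 0 < e := Nat.pos_of_ne_zero (by rintro rfl; simp at he)
  have hcomm : ∀ g h, Commute (ρ g) (ρ h) := fun g h ↦ (Commute.all g h).map ρ
  have hpow : ∀ g, ρ g ^ e = 1 := fun g ↦ by rw [← map_pow, hG, map_one]
  have hind := iSupIndep_iInf_eigenspace_of_commute hcomm
  let S := {χ : G → K // ⨅ g, eigenspace (ρ g) (χ g) ≠ ⊥}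
  let : Fintype S := hind.fintypeNeBotOfFiniteDimensional
  have hroot (χ : S) (g : G) : χ.1 g ∈ nthRootsFinset e (1 : K) :=
    (mem_nthRootsFinset he0 1).mpr
      (pow_eq_one_of_hasEigenvalue (hpow g) (hasEigenvalue_of_iInf_eigenspace_ne_bot χ.2 g))
  let eigenvalues : G → S → nthRootsFinset e (1 : K) := fun g χ ↦ ⟨χ.1 g, hroot χ g⟩
  have htop := iSup_iInf_eigenspace_eq_top_of_commute
    (fun g ↦ isSemisimple_of_pow_eq_one he (hpow g)) fun g h _ ↦ hcomm g h
  have heigenvalues : Function.Injective eigenvalues := fun g h hgh ↦ hρ <|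
    eq_of_forall_iInf_eigenspace_ne_bot htop fun χ hχ ↦ congrArg Subtype.val (congrFun hgh ⟨χ, hχ⟩)
  calc Nat.card G ≤ Nat.card (S → nthRootsFinset e (1 : K)) :=
        Nat.card_le_card_of_injective eigenvalues heigenvalues
    _ = (nthRootsFinset e (1 : K)).card ^ Fintype.card S := by simp [Nat.card_fun]
    _ ≤ e ^ Fintype.card S := Nat.pow_le_pow_left (Polynomial.card_nthRootsFinset_le e 1) _
    _ ≤ e ^ finrank K V := Nat.pow_le_pow_right he0 hind.subtype_ne_bot_le_finrank

end Module.End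

/-- The symmetric group on an infinite set is not linear: `Sym(ℕ)` does not embed into
`GL(n, F)` for any `n` and any field `F`. -/
theorem symmetric_group_nat_not_linear
    (n : ℕ) (F : Type*) [Field F] (f : Equiv.Perm ℕ →* GL (Fin n) F) :
    ¬ Function.Injective f := by
  intro hf
  let K := AlgebraicClosure F
  obtain ⟨p, hp, hpK⟩ := exists_prime_natCast_ne_zero K
  have : NeZero p := ⟨hp.ne_zero⟩
  let A := Fin (n + 1) → Multiplicative (ZMod p)
  obtain ⟨ι, hι⟩ := Equiv.Perm.exists_injective_monoidHom_of_countable A ℕ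
  let ρ : A →* End K (Fin n → K) :=
    (Units.coeHom _).comp <| Matrix.GeneralLinearGroup.toLin.toMonoidHom.comp <|
      (Matrix.GeneralLinearGroup.map (algebraMap F K)).comp (f.comp ι)
  have hρ : Function.Injective ρ := Units.val_injective.comp <|
    Matrix.GeneralLinearGroup.toLin.injective.comp <|
      (Matrix.GeneralLinearGroup.map_injective (algebraMap F K).injective).comp (hf.comp hι)
  have hcard := natCard_le_pow_finrank_of_injective hpK
    (fun g ↦ funext fun i ↦ Multiplicative.zmod_pow_eq_one p (g i)) hρ
  have hcardA : Nat.card A = p ^ (n + 1) := by simp [A]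
  rw [hcardA, finrank_fin_fun] at hcard
  exact (Nat.pow_lt_pow_right hp.one_lt n.lt_succ_self).not_ge hcard
end
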